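/- Conformal invariance of the teleparallel Lagrangian: for every continuously differentiable coframe ϑ on U and every continuously differentiable h : U → ℝ, λ(e^{−2h} l, e^{h} m, e^{4h} n) = λ(l, m, n) at every point of U. -/

import Mathlib

noncomputable section

open scoped Matrix

/-- Points of ℝ⁴. -/
abbrev Pt : Type := Fin 4 → ℝ

/-- Partial derivative ∂_α of a function on ℝ⁴. -/
def pd {E : Type*} [NormedAddCommGroup E] [NormedSpace ℝ E]
    (α : Fin 4) (f : Pt → E) (x : Pt) : E :=
  fderiv ℝ f x (Pi.single α 1)

/-- o_{jk} = o^{jk} = diag(1,-1,-1,-1). -/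
def oM : Fin 4 → Fin 4 → ℝ := fun j k => if j = k then (if j = 0 then 1 else -1) else 0

/-- Totally antisymmetric symbol, ε_{0123} = 1. -/
def eps (a b c d : Fin 4) : ℝ :=
  ∑ σ : Equiv.Perm (Fin 4),
    if σ 0 = a ∧ σ 1 = b ∧ σ 2 = c ∧ σ 3 = d then ((Equiv.Perm.sign σ : ℤ) : ℝ) else 0

/-- Determinant det(ϑ^j_α) of a coframe. -/
def cofDet (ϑ : Fin 4 → Pt → Fin 4 → ℝ) (x : Pt) : ℝ :=
  Matrix.det (Matrix.of fun j α => ϑ j x α)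

/-- l := ϑ⁰ + ϑ³. -/
def lC (ϑ : Fin 4 → Pt → Fin 4 → ℝ) (x : Pt) (α : Fin 4) : ℂ :=
  (ϑ 0 x α : ℂ) + (ϑ 3 x α : ℂ)

/-- m := ϑ¹ + iϑ². -/
def mC (ϑ : Fin 4 → Pt → Fin 4 → ℝ) (x : Pt) (α : Fin 4) : ℂ :=
  (ϑ 1 x α : ℂ) + Complex.I * (ϑ 2 x α : ℂ)

/-- n := ϑ⁰ - ϑ³. -/
def nC (ϑ : Fin 4 → Pt → Fin 4 → ℝ) (x : Pt) (α : Fin 4) : ℂ :=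
  (ϑ 0 x α : ℂ) - (ϑ 3 x α : ℂ)

/-- The teleparallel Lagrangian density
λ(l,m,n) := (1/6) ε^{αβγδ} l_α (n_β ∂_γ l_δ − m̄_β ∂_γ m_δ − m_β ∂_γ m̄_δ). -/
def lam (l m n : Pt → Fin 4 → ℂ) (x : Pt) : ℂ :=
  (1/6 : ℂ) * ∑ α : Fin 4, ∑ β : Fin 4, ∑ γ : Fin 4, ∑ δ : Fin 4,
    (eps α β γ δ : ℂ) * l x α *
      (n x β * pd γ (fun y => l y δ) x
        - (starRingEnd ℂ) (m x β) * pd γ (fun y => m y δ) x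
        - m x β * pd γ (fun y => (starRingEnd ℂ) (m y δ)) x)

/-- (du)_{αβ} := ∂_α u_β − ∂_β u_α. -/
def dcov (u : Pt → Fin 4 → ℝ) (α β : Fin 4) (x : Pt) : ℝ :=
  pd α (fun y => u y β) x - pd β (fun y => u y α) x

/-- Axial torsion T^ax(ϑ)_{αβγ}. -/
def Tax (ϑ : Fin 4 → Pt → Fin 4 → ℝ) (α β γ : Fin 4) (x : Pt) : ℝ :=
  (1/3 : ℝ) * ∑ j : Fin 4, ∑ k : Fin 4, oM j k *
    (ϑ j x α * dcov (ϑ k) β γ x + ϑ j x β * dcov (ϑ k) γ α x + ϑ j x γ * dcov (ϑ k) α β x)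

/-- Metric g_{αβ} := o_{jk} ϑ^j_α ϑ^k_β. -/
def gmat (ϑ : Fin 4 → Pt → Fin 4 → ℝ) (x : Pt) : Matrix (Fin 4) (Fin 4) ℝ :=
  Matrix.of fun α β => ∑ j : Fin 4, ∑ k : Fin 4, oM j k * ϑ j x α * ϑ k x β

/-- Inverse metric g^{αβ}. -/
def ginv (ϑ : Fin 4 → Pt → Fin 4 → ℝ) (x : Pt) : Matrix (Fin 4) (Fin 4) ℝ :=
  (gmat ϑ x)⁻¹

/-- Christoffel symbols Γ^β_{αγ}. -/
def Chr (ϑ : Fin 4 → Pt → Fin 4 → ℝ) (β α γ : Fin 4) (x : Pt) : ℝ :=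
  (1/2 : ℝ) * ∑ δ : Fin 4, ginv ϑ x β δ *
    (pd α (fun y => gmat ϑ y γ δ) x + pd γ (fun y => gmat ϑ y α δ) x
      - pd δ (fun y => gmat ϑ y α γ) x)

/-- Levi-Civita covariant derivative ∇_α u_β of a complex covector field. -/
def covC (ϑ : Fin 4 → Pt → Fin 4 → ℝ) (u : Pt → Fin 4 → ℂ) (α β : Fin 4) (x : Pt) : ℂ :=
  pd α (fun y => u y β) x - ∑ γ : Fin 4, (Chr ϑ γ α β x : ℂ) * u x γ

/-- Levi-Civita covariant derivative ∇_γ F_{αβ} of a complex 2-form. -/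
def covF (ϑ : Fin 4 → Pt → Fin 4 → ℝ) (F : Pt → Fin 4 → Fin 4 → ℂ) (γ α β : Fin 4) (x : Pt) : ℂ :=
  pd γ (fun y => F y α β) x - ∑ δ : Fin 4, (Chr ϑ δ γ α x : ℂ) * F x δ β
    - ∑ δ : Fin 4, (Chr ϑ δ γ β x : ℂ) * F x α δ

/-- The 2-form (l∧m)_{αβ}. -/
def lmForm (ϑ : Fin 4 → Pt → Fin 4 → ℝ) (x : Pt) (α β : Fin 4) : ℂ :=
  lC ϑ x α * mC ϑ x β - lC ϑ x β * mC ϑ x α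

/-- The Griffiths–Newing covector v_α := ∇^β (l∧m)_{αβ} − m^β ∇_α l_β. -/
def vGN (ϑ : Fin 4 → Pt → Fin 4 → ℝ) (α : Fin 4) (x : Pt) : ℂ :=
  (∑ β : Fin 4, ∑ γ : Fin 4, (ginv ϑ x β γ : ℂ) * covF ϑ (fun y a b => lmForm ϑ y a b) γ α β x)
  - ∑ β : Fin 4, ∑ γ : Fin 4, (ginv ϑ x β γ : ℂ) * mC ϑ x γ * covC ϑ (fun y b => lC ϑ y b) α β x

/-- l^α := g^{αβ} l_β. -/
def lup (ϑ : Fin 4 → Pt → Fin 4 → ℝ) (x : Pt) (α : Fin 4) : ℂ :=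
  ∑ β : Fin 4, (ginv ϑ x α β : ℂ) * lC ϑ x β

/-- Divergence ∇_α l^α := ∂_α l^α + Γ^α_{αγ} l^γ. -/
def divl (ϑ : Fin 4 → Pt → Fin 4 → ℝ) (x : Pt) : ℂ :=
  ∑ α : Fin 4, (pd α (fun y => lup ϑ y α) x
    + ∑ γ : Fin 4, (Chr ϑ α α γ x : ℂ) * lup ϑ x γ)

/-- Components of the 4-form L_tele(ϑ) = l ∧ T^ax. -/
def LteleForm (ϑ : Fin 4 → Pt → Fin 4 → ℝ) (α β γ δ : Fin 4) (x : Pt) : ℂ :=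
  lC ϑ x α * (Tax ϑ β γ δ x : ℂ) - lC ϑ x β * (Tax ϑ α γ δ x : ℂ)
    + lC ϑ x γ * (Tax ϑ α β δ x : ℂ) - lC ϑ x δ * (Tax ϑ α β γ x : ℂ)

/-- Hodge star of a complex 4-form: ★F := (1/24) √|det g| F^{αβγδ} ε_{αβγδ}. -/
def star4C (ϑ : Fin 4 → Pt → Fin 4 → ℝ) (F : Fin 4 → Fin 4 → Fin 4 → Fin 4 → ℂ) (x : Pt) : ℂ :=
  (1/24 : ℂ) * (cofDet ϑ x : ℂ) *
    ∑ α : Fin 4, ∑ β : Fin 4, ∑ γ : Fin 4, ∑ δ : Fin 4,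
      ∑ α' : Fin 4, ∑ β' : Fin 4, ∑ γ' : Fin 4, ∑ δ' : Fin 4,
        (ginv ϑ x α α' : ℂ) * (ginv ϑ x β β' : ℂ) * (ginv ϑ x γ γ' : ℂ) * (ginv ϑ x δ δ' : ℂ) *
          F α' β' γ' δ' * (eps α β γ δ : ℂ)

/-- Hodge star of a real 4-form. -/
def star4 (ϑ : Fin 4 → Pt → Fin 4 → ℝ) (F : Fin 4 → Fin 4 → Fin 4 → Fin 4 → ℝ) (x : Pt) : ℝ :=
  (1/24 : ℝ) * cofDet ϑ x *
    ∑ α : Fin 4, ∑ β : Fin 4, ∑ γ : Fin 4, ∑ δ : Fin 4,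
      ∑ α' : Fin 4, ∑ β' : Fin 4, ∑ γ' : Fin 4, ∑ δ' : Fin 4,
        ginv ϑ x α α' * ginv ϑ x β β' * ginv ϑ x γ γ' * ginv ϑ x δ δ' *
          F α' β' γ' δ' * eps α β γ δ

/-- ★L_tele(ϑ). -/
def starLtele (ϑ : Fin 4 → Pt → Fin 4 → ℝ) (x : Pt) : ℂ :=
  star4C ϑ (fun α β γ δ => LteleForm ϑ α β γ δ x) x

/-! Differentiating the conformal factors `e^f`, `e^g`, `e^k` of `l`, `m`, `n` produces extra terms
that contract the Levi-Civita symbol with tensors symmetric in two of its slots (`l_α l_δ`, resp.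
`m̄_β m_δ + m_β m̄_δ`), so they vanish. The remaining `n`-part of `λ` is multiplied by `e^{2f+k}`
and the `m`-part by `e^{f+2g}`; both factors are `1` for `(f, g, k) = (-2h, h, 4h)`. -/

open Finset Complex ComplexConjugate

lemma eps_eq_sum_ite_coe_eq (v : Fin 4 → Fin 4) :
    eps (v 0) (v 1) (v 2) (v 3) =
      ∑ σ : Equiv.Perm (Fin 4), if ⇑σ = v then ((Equiv.Perm.sign σ : ℤ) : ℝ) else 0 := by
  simp only [eps, funext_iff, Fin.forall_fin_succ, IsEmpty.forall_iff, and_true]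
  rfl

lemma eps_comp_swap (v : Fin 4 → Fin 4) {i j : Fin 4} (hij : i ≠ j) :
    eps (v (Equiv.swap i j 0)) (v (Equiv.swap i j 1)) (v (Equiv.swap i j 2))
      (v (Equiv.swap i j 3)) = -eps (v 0) (v 1) (v 2) (v 3) := by
  refine (eps_eq_sum_ite_coe_eq (v ∘ Equiv.swap i j)).trans ?_
  rw [eps_eq_sum_ite_coe_eq, ← sum_neg_distrib]
  refine Fintype.sum_equiv (Equiv.mulRight (Equiv.swap i j)) _ _ fun σ => ?_
  have hcomp : ⇑σ = v ∘ Equiv.swap i j ↔ ⇑(σ * Equiv.swap i j) = v := by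
    rw [Equiv.Perm.coe_mul]
    constructor
    · intro h; funext k; simp [congrFun h]
    · rintro rfl; funext k; simp
  simp only [Equiv.coe_mulRight, hcomp, Equiv.Perm.sign_mul, Equiv.Perm.sign_swap hij]
  split_ifs <;> simp

lemma eps_swap_03 (a b c d : Fin 4) : eps a b c d = -eps d b c a := by
  simpa [Equiv.swap_apply_of_ne_of_ne] using
    eps_comp_swap ![d, b, c, a] (i := 0) (j := 3) (by decide)

lemma eps_swap_13 (a b c d : Fin 4) : eps a b c d = -eps a d c b := by
  simpa [Equiv.swap_apply_of_ne_of_ne] using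
    eps_comp_swap ![a, d, c, b] (i := 1) (j := 3) (by decide)

lemma sum_sum_eq_zero_of_antisymm {ι M : Type*} [Fintype ι] [AddCommGroup M] [IsAddTorsionFree M]
    (F : ι → ι → M) (hF : ∀ i j, F j i = -F i j) : ∑ i, ∑ j, F i j = 0 := by
  rw [← self_eq_neg]
  calc ∑ i, ∑ j, F i j = ∑ j, ∑ i, F i j := sum_comm
    _ = -∑ i, ∑ j, F i j := by
      simp only [← sum_neg_distrib]
      exact sum_congr rfl fun j _ => sum_congr rfl fun i _ => hF j i

lemma sum_eps_mul_eq_zero_of_symm_03 (T : Fin 4 → Fin 4 → Fin 4 → Fin 4 → ℂ)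
    (hT : ∀ a b c d, T d b c a = T a b c d) :
    ∑ a, ∑ b, ∑ c, ∑ d, (eps a b c d : ℂ) * T a b c d = 0 := by
  have hcomm (a : Fin 4) : ∑ b, ∑ c, ∑ d, (eps a b c d : ℂ) * T a b c d
      = ∑ d, ∑ b, ∑ c, (eps a b c d : ℂ) * T a b c d :=
    (sum_congr rfl fun b _ => sum_comm).trans sum_comm
  simp_rw [hcomm]
  refine sum_sum_eq_zero_of_antisymm _ fun a d => ?_
  simp only [← sum_neg_distrib, eps_swap_03 d, hT d, ofReal_neg, neg_mul]

lemma sum_eps_mul_eq_zero_of_symm_13 (T : Fin 4 → Fin 4 → Fin 4 → Fin 4 → ℂ)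
    (hT : ∀ a b c d, T a d c b = T a b c d) :
    ∑ a, ∑ b, ∑ c, ∑ d, (eps a b c d : ℂ) * T a b c d = 0 := by
  refine sum_eq_zero fun a _ => ?_
  have hcomm : ∑ b, ∑ c, ∑ d, (eps a b c d : ℂ) * T a b c d
      = ∑ b, ∑ d, ∑ c, (eps a b c d : ℂ) * T a b c d :=
    sum_congr rfl fun b _ => sum_comm
  rw [hcomm]
  refine sum_sum_eq_zero_of_antisymm _ fun b d => ?_
  simp only [← sum_neg_distrib, eps_swap_13 a d, hT a d, ofReal_neg, neg_mul]

section PartialDerivatives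

variable {x : Pt} (γ : Fin 4)

lemma pd_mul {𝔸 : Type*} [NormedCommRing 𝔸] [NormedAlgebra ℝ 𝔸] {f g : Pt → 𝔸}
    (hf : DifferentiableAt ℝ f x) (hg : DifferentiableAt ℝ g x) :
    pd γ (fun y => f y * g y) x = f x * pd γ g x + pd γ f x * g x := by
  simp only [pd, fderiv_fun_mul hf hg, add_apply, smul_apply, smul_eq_mul, mul_comm (g x)]

lemma pd_ofReal {u : Pt → ℝ} (hu : DifferentiableAt ℝ u x) :
    pd γ (fun y => (u y : ℂ)) x = pd γ u x := by
  have hu' : HasFDerivAt (fun y => (u y : ℂ)) (ofRealCLM.comp (fderiv ℝ u x)) x :=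
    ofRealCLM.hasFDerivAt.comp x hu.hasFDerivAt
  simp [pd, hu'.fderiv]

lemma pd_exp {g : Pt → ℝ} (hg : DifferentiableAt ℝ g x) :
    pd γ (fun y => Real.exp (g y)) x = Real.exp (g x) * pd γ g x := by
  simp [pd, hg.hasFDerivAt.exp.fderiv]

lemma pd_ofReal_exp_mul {g : Pt → ℝ} {f : Pt → ℂ} (hg : DifferentiableAt ℝ g x)
    (hf : DifferentiableAt ℝ f x) :
    pd γ (fun y => (Real.exp (g y) : ℂ) * f y) x
      = Real.exp (g x) * (pd γ f x + pd γ g x * f x) := by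
  have hexp : DifferentiableAt ℝ (fun y => Real.exp (g y)) x := hg.exp
  have hexpC : DifferentiableAt ℝ (fun y => (Real.exp (g y) : ℂ)) x :=
    ofRealCLM.differentiableAt.comp x hexp
  rw [pd_mul γ hexpC hf, pd_ofReal γ hexp, pd_exp γ hg]
  push_cast
  ring

end PartialDerivatives

theorem lam_exp_mul_eq_lam (l m n : Pt → Fin 4 → ℂ) (f g k : Pt → ℝ) {x : Pt}
    (hl : ∀ δ, DifferentiableAt ℝ (fun y => l y δ) x)
    (hm : ∀ δ, DifferentiableAt ℝ (fun y => m y δ) x)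
    (hf : DifferentiableAt ℝ f x) (hg : DifferentiableAt ℝ g x)
    (hfk : 2 * f x + k x = 0) (hfg : f x + 2 * g x = 0) :
    lam (fun y α => (Real.exp (f y) : ℂ) * l y α) (fun y α => (Real.exp (g y) : ℂ) * m y α)
      (fun y α => (Real.exp (k y) : ℂ) * n y α) x = lam l m n x := by
  have hfkf : (Real.exp (f x) : ℂ) * Real.exp (k x) * Real.exp (f x) = 1 := by
    norm_cast
    rw [← Real.exp_add, ← Real.exp_add, Real.exp_eq_one_iff]
    linarith
  have hfgg : (Real.exp (f x) : ℂ) * Real.exp (g x) * Real.exp (g x) = 1 := by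
    norm_cast
    rw [← Real.exp_add, ← Real.exp_add, Real.exp_eq_one_iff]
    linarith
  have hconj (δ : Fin 4) : (fun y => conj ((Real.exp (g y) : ℂ) * m y δ))
      = fun y => (Real.exp (g y) : ℂ) * conj (m y δ) := by
    simp only [map_mul, conj_ofReal]
  have hl_sum :
      ∑ α, ∑ β, ∑ γ, ∑ δ, (eps α β γ δ : ℂ) * (pd γ f x * (l x α * n x β * l x δ)) = 0 :=
    sum_eps_mul_eq_zero_of_symm_03 _ fun _ _ _ _ => by ring
  have hm_sum : ∑ α, ∑ β, ∑ γ, ∑ δ, (eps α β γ δ : ℂ) *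
      (pd γ g x * (l x α * (conj (m x β) * m x δ + m x β * conj (m x δ)))) = 0 :=
    sum_eps_mul_eq_zero_of_symm_13 _ fun _ _ _ _ => by ring
  have hterm (α β γ δ : Fin 4) :
      (eps α β γ δ : ℂ) * ((Real.exp (f x) : ℂ) * l x α) *
        ((Real.exp (k x) : ℂ) * n x β * pd γ (fun y => (Real.exp (f y) : ℂ) * l y δ) x
          - conj ((Real.exp (g x) : ℂ) * m x β) * pd γ (fun y => (Real.exp (g y) : ℂ) * m y δ) x
          - (Real.exp (g x) : ℂ) * m x β *
              pd γ (fun y => conj ((Real.exp (g y) : ℂ) * m y δ)) x)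
      = (eps α β γ δ : ℂ) * l x α *
          (n x β * pd γ (fun y => l y δ) x - conj (m x β) * pd γ (fun y => m y δ) x
            - m x β * pd γ (fun y => conj (m y δ)) x)
        + (eps α β γ δ : ℂ) * (pd γ f x * (l x α * n x β * l x δ))
        - (eps α β γ δ : ℂ) *
            (pd γ g x * (l x α * (conj (m x β) * m x δ + m x β * conj (m x δ)))) := by
    rw [hconj, pd_ofReal_exp_mul γ hf (hl δ), pd_ofReal_exp_mul γ hg (hm δ),
      pd_ofReal_exp_mul γ hg (f := fun y => conj (m y δ)) (hm δ).star, map_mul, conj_ofReal]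
    linear_combination (eps α β γ δ : ℂ) * l x α *
      (n x β * (pd γ (fun y => l y δ) x + ((pd γ f x : ℝ) : ℂ) * l x δ) * hfkf
        - (conj (m x β) * (pd γ (fun y => m y δ) x + ((pd γ g x : ℝ) : ℂ) * m x δ)
          + m x β * (pd γ (fun y => conj (m y δ)) x + ((pd γ g x : ℝ) : ℂ) * conj (m x δ))) * hfgg)
  simp only [lam, hterm, sum_add_distrib, sum_sub_distrib, hl_sum, hm_sum, add_zero, sub_zero]

theorem teleparallel_lagrangian_conformal_invariance_general
    (U : Set Pt) (hU : IsOpen U) (ϑ : Fin 4 → Pt → Fin 4 → ℝ)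
    (hreg : ∀ j, ContDiffOn ℝ 1 (ϑ j) U)
    (h : Pt → ℝ) (hh : ContDiffOn ℝ 1 h U) :
    ∀ x ∈ U,
      lam (fun y α => (Real.exp (-2 * h y) : ℂ) * lC ϑ y α)
        (fun y α => (Real.exp (h y) : ℂ) * mC ϑ y α)
        (fun y α => (Real.exp (4 * h y) : ℂ) * nC ϑ y α) x
      = lam (fun y α => lC ϑ y α) (fun y α => mC ϑ y α) (fun y α => nC ϑ y α) x := by
  intro x hx
  have hϑ (j δ : Fin 4) : DifferentiableAt ℝ (fun y => (ϑ j y δ : ℂ)) x :=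
    ofRealCLM.differentiableAt.comp x <| differentiableAt_pi.mp
      (((hreg j).differentiableOn one_ne_zero).differentiableAt (hU.mem_nhds hx)) δ
  have hhx : DifferentiableAt ℝ h x :=
    (hh.differentiableOn one_ne_zero).differentiableAt (hU.mem_nhds hx)
  exact lam_exp_mul_eq_lam _ _ _ (fun y => -2 * h y) h (fun y => 4 * h y)
    (fun δ => (hϑ 0 δ).add (hϑ 3 δ)) (fun δ => (hϑ 1 δ).add ((hϑ 2 δ).const_mul I))
    (hhx.const_mul (-2)) hhx (by ring) (by ring)

/-- Conformal invariance of the teleparallel Lagrangian: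
λ(e^{−2h} l, e^{h} m, e^{4h} n) = λ(l, m, n). -/
theorem teleparallel_lagrangian_conformal_invariance
    (U : Set Pt) (hU : IsOpen U) (ϑ : Fin 4 → Pt → Fin 4 → ℝ)
    (hreg : ∀ j, ContDiffOn ℝ 1 (ϑ j) U)
    (hdet : ∀ x ∈ U, 0 < cofDet ϑ x)
    (h : Pt → ℝ) (hh : ContDiffOn ℝ 1 h U) :
    ∀ x ∈ U,
      lam (fun y α => (Real.exp (-2 * h y) : ℂ) * lC ϑ y α)
        (fun y α => (Real.exp (h y) : ℂ) * mC ϑ y α)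
        (fun y α => (Real.exp (4 * h y) : ℂ) * nC ϑ y α) x
      = lam (fun y α => lC ϑ y α) (fun y α => mC ϑ y α) (fun y α => nC ϑ y α) x :=
  teleparallel_lagrangian_conformal_invariance_general U hU ϑ hreg h hh
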